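/- arXiv:2503.14676 — 5 statements merged into one kernel-verified Lean document; each statement's English description precedes it below -/
import Mathlib

section
/- Let (N,g) be a complete connected Riemannian manifold and U ⊂ N a nonempty open bounded set. Then the travel time map R(p) = d_g(p,·)|_{cl(U)} is injective: if d_g(p,z) = d_g(q,z) for all z ∈ cl(U), then p = q. -/
/-- A unit-speed minimizing geodesic segment on `[a,b]`, in metric terms. -/
def IsMinGeodOn {N : Type*} [MetricSpace N] (γ : ℝ → N) (a b : ℝ) : Prop :=
  ∀ s ∈ Set.Icc a b, ∀ t ∈ Set.Icc a b, dist (γ s) (γ t) = |s - t|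

/-- A (complete, unit-speed) geodesic: a curve that is locally distance minimizing. -/
def IsGeodesic {N : Type*} [MetricSpace N] (γ : ℝ → N) : Prop :=
  ∀ t : ℝ, ∃ ε > 0, IsMinGeodOn γ (t - ε) (t + ε)

/-- Let `(N,g)` be a complete connected Riemannian manifold, encoded as a
proper connected metric space in which any two points are joined by a (complete) minimizing
geodesic (`hconn`, by Hopf–Rinow) and in which two geodesics agreeing on a nondegenerate
interval agree everywhere (`hrig`).  For a nonempty open bounded `U ⊆ N`, the travel time
map `R(p) = dist(p,·)|_{cl U}` is injective: if `dist p z = dist q z` for all `z ∈ cl U`,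
then `p = q`. -/
theorem travelTimeMap_injective
    {N : Type*} [MetricSpace N] [ProperSpace N] [ConnectedSpace N]
    (hconn : ∀ x y : N, ∃ γ : ℝ → N, IsGeodesic γ ∧ γ 0 = x ∧ γ (dist x y) = y ∧
      IsMinGeodOn γ 0 (dist x y))
    (hrig : ∀ γ₁ γ₂ : ℝ → N, IsGeodesic γ₁ → IsGeodesic γ₂ →
      ∀ a b : ℝ, a < b → (∀ t ∈ Set.Icc a b, γ₁ t = γ₂ t) → γ₁ = γ₂)
    (U : Set N) (hU : IsOpen U) (hne : U.Nonempty) (hb : Bornology.IsBounded U)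
    (p q : N) (h : ∀ z ∈ closure U, dist p z = dist q z) : p = q := by
  obtain ⟨x, hx⟩ := hne
  rcases eq_or_lt_of_le (dist_nonneg : (0:ℝ) ≤ dist x p) with hd0 | hd0
  · -- dist x p = 0, so x = p
    have hxp : x = p := dist_eq_zero.mp hd0.symm
    have hz := h x (subset_closure hx)
    rw [hxp] at hz
    exact (show q = p by simpa using hz.symm).symm
  · set d := dist x p with hdd
    obtain ⟨γ, hγgeo, hγ0, hγd, hγmin⟩ := hconn x p
    obtain ⟨r, hr0, hrU⟩ := Metric.isOpen_iff.mp hU x hx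
    set ε := min (r/2) (d/2) with hε
    have hε0 : 0 < ε := lt_min (by linarith) (by linarith)
    have hεd : ε < d := lt_of_le_of_lt (min_le_right _ _) (by linarith)
    have hεr : ε < r := lt_of_le_of_lt (min_le_left _ _) (by linarith)
    have hmem : ∀ t ∈ Set.Icc (0:ℝ) ε, γ t ∈ U := by
      intro t ht
      apply hrU
      have h1 : dist (γ t) (γ 0) = |t - 0| :=
        hγmin t ⟨ht.1, le_trans ht.2 hεd.le⟩ 0 ⟨le_refl _, hd0.le⟩
      have : dist (γ t) x = t := by
        rw [hγ0] at h1; rw [h1, sub_zero, abs_of_nonneg ht.1]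
      exact Metric.mem_ball.mpr (by rw [this]; exact lt_of_le_of_lt ht.2 hεr)
    have hq : ∀ t ∈ Set.Icc (0:ℝ) ε, dist q (γ t) = d - t := by
      intro t ht
      have hz := h (γ t) (subset_closure (hmem t ht))
      have h1 : dist (γ d) (γ t) = |d - t| :=
        hγmin d ⟨hd0.le, le_refl _⟩ t ⟨ht.1, le_trans ht.2 hεd.le⟩
      rw [hγd] at h1
      rw [← hz, h1, abs_of_nonneg (by linarith [ht.2] : (0:ℝ) ≤ d - t)]
    -- geodesic from γ ε to q
    obtain ⟨σ, hσgeo, hσ0, hσe, hσmin⟩ := hconn (γ ε) q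
    have hdεq : dist (γ ε) q = d - ε := by
      rw [dist_comm]; exact hq ε ⟨hε0.le, le_refl _⟩
    rw [hdεq] at hσe hσmin
    set τ : ℝ → N := fun t => σ (t - ε) with hτ
    have hτgeo : IsGeodesic τ := by
      intro t
      obtain ⟨e, he0, hemin⟩ := hσgeo (t - ε)
      refine ⟨e, he0, fun s hs u hu => ?_⟩
      have := hemin (s - ε) ⟨by linarith [hs.1], by linarith [hs.2]⟩
        (u - ε) ⟨by linarith [hu.1], by linarith [hu.2]⟩
      simpa using this
    have hτε : τ ε = γ ε := by simp [hτ, hσ0]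
    have hτd : τ d = q := by simp [hτ, hσe]
    have hτmin : ∀ s ∈ Set.Icc ε d, ∀ t ∈ Set.Icc ε d, dist (τ s) (τ t) = |s - t| := by
      intro s hs t ht
      have := hσmin (s - ε) ⟨by linarith [hs.1], by linarith [hs.2]⟩
        (t - ε) ⟨by linarith [ht.1], by linarith [ht.2]⟩
      simpa using this
    -- combined minimizing property
    have key : ∀ s ∈ Set.Icc (0:ℝ) ε, ∀ t ∈ Set.Icc ε d, dist (γ s) (τ t) = t - s := by
      intro s hs t ht
      have hle : dist (γ s) (τ t) ≤ t - s := by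
        calc dist (γ s) (τ t) ≤ dist (γ s) (γ ε) + dist (γ ε) (τ t) := dist_triangle _ _ _
          _ = (ε - s) + (t - ε) := by
              rw [hγmin s ⟨hs.1, le_trans hs.2 hεd.le⟩ ε ⟨hε0.le, hεd.le⟩,
                ← hτε, hτmin ε ⟨le_refl _, hεd.le⟩ t ht,
                abs_of_nonpos (by linarith [hs.2] : s - ε ≤ 0),
                abs_of_nonpos (by linarith [ht.1] : ε - t ≤ 0)]
              ring
          _ = t - s := by ring
      have hge : t - s ≤ dist (γ s) (τ t) := by
        have h1 : dist x (γ s) = s := by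
          have := hγmin 0 ⟨le_refl _, hd0.le⟩ s ⟨hs.1, le_trans hs.2 hεd.le⟩
          rw [hγ0] at this
          rw [this, abs_of_nonpos (by linarith [hs.1] : (0:ℝ) - s ≤ 0)]; ring
        have h2 : dist (τ t) q = d - t := by
          rw [← hτd]; rw [hτmin t ht d ⟨hεd.le, le_refl _⟩,
            abs_of_nonpos (by linarith [ht.2] : t - d ≤ 0)]; ring
        have h3 : dist x q = d := by
          rw [← hγ0, dist_comm]; simpa using hq 0 ⟨le_refl _, hε0.le⟩
        have := dist_triangle4 x (γ s) (τ t) q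
        rw [h1, h2, h3] at this
        linarith
      linarith
    set c : ℝ → N := fun t => if t ≤ ε then γ t else τ t with hc
    have hcγ : ∀ t, t ≤ ε → c t = γ t := fun t ht => if_pos ht
    have hcτ : ∀ t, ε ≤ t → c t = τ t := by
      intro t ht
      rcases eq_or_lt_of_le ht with rfl | ht'
      · simp [hc, hτε]
      · exact if_neg (not_le.mpr ht')
    have cmin : IsMinGeodOn c 0 d := by
      intro s hs t ht
      rcases le_or_gt s ε with hsε | hsε <;> rcases le_or_gt t ε with htε | htε
      · rw [hcγ s hsε, hcγ t htε]
        exact hγmin s ⟨hs.1, le_trans hsε hεd.le⟩ t ⟨ht.1, le_trans htε hεd.le⟩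
      · rw [hcγ s hsε, hcτ t htε.le]
        rw [key s ⟨hs.1, hsε⟩ t ⟨htε.le, ht.2⟩,
          abs_of_nonpos (by linarith : s - t ≤ 0)]; ring
      · rw [hcτ s hsε.le, hcγ t htε, dist_comm]
        rw [key t ⟨ht.1, htε⟩ s ⟨hsε.le, hs.2⟩,
          abs_of_nonneg (by linarith : (0:ℝ) ≤ s - t)]
      · rw [hcτ s hsε.le, hcτ t htε.le]
        exact hτmin s ⟨hsε.le, hs.2⟩ t ⟨htε.le, ht.2⟩
    have cgeo : IsGeodesic c := by
      intro t
      rcases lt_trichotomy t ε with htε | rfl | htε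
      · obtain ⟨e, he0, hemin⟩ := hγgeo t
        refine ⟨min e (ε - t), lt_min he0 (by linarith), fun s hs u hu => ?_⟩
        have hsε : s ≤ ε := by
          have := hs.2; have := min_le_right e (ε - t); linarith
        have huε : u ≤ ε := by
          have := hu.2; have := min_le_right e (ε - t); linarith
        rw [hcγ s hsε, hcγ u huε]
        exact hemin s ⟨by linarith [hs.1, min_le_left e (ε - t)],
            by linarith [hs.2, min_le_left e (ε - t)]⟩
          u ⟨by linarith [hu.1, min_le_left e (ε - t)],
            by linarith [hu.2, min_le_left e (ε - t)]⟩
      · refine ⟨min ε (d - ε), lt_min hε0 (by linarith), fun s hs u hu => ?_⟩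
        have h1 : min ε (d - ε) ≤ ε := min_le_left _ _
        have h2 : min ε (d - ε) ≤ d - ε := min_le_right _ _
        exact cmin s ⟨by linarith [hs.1], by linarith [hs.2]⟩
          u ⟨by linarith [hu.1], by linarith [hu.2]⟩
      · obtain ⟨e, he0, hemin⟩ := hτgeo t
        refine ⟨min e (t - ε), lt_min he0 (by linarith), fun s hs u hu => ?_⟩
        have hsε : ε ≤ s := by
          have := hs.1; have := min_le_right e (t - ε); linarith
        have huε : ε ≤ u := by
          have := hu.1; have := min_le_right e (t - ε); linarith
        rw [hcτ s hsε, hcτ u huε]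
        exact hemin s ⟨by linarith [hs.1, min_le_left e (t - ε)],
            by linarith [hs.2, min_le_left e (t - ε)]⟩
          u ⟨by linarith [hu.1, min_le_left e (t - ε)],
            by linarith [hu.2, min_le_left e (t - ε)]⟩
    have hcg : c = γ := hrig c γ cgeo hγgeo 0 ε hε0 (fun t ht => hcγ t ht.2)
    have : γ d = τ d := by rw [← hcg]; exact hcτ d hεd.le
    rw [hγd, hτd] at this
    exact this
end

section
/- Let (N,g) be a complete Riemannian manifold, y ∈ N, ξ a unit tangent vector at y, γ the geodesic with γ(0)=y, γ'(0)=ξ, and τ(y,ξ) = sup{t>0 : d_g(y,γ(t)) = t} the cut time. Suppose 0 < s ≤ τ(y,ξ), x = γ(s), and r > 0. If τ(y,ξ) < s + r, then there exists ε > 0 such that B(x, r+ε) ⊂ cl(B(y, s+r)). -/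
/-- The cut time `τ(y,ξ) = sup {t > 0 : dist(γ 0, γ t) = t}` of a unit-speed geodesic
(valued in `ℝ≥0∞`, so `τ = ∞` when the geodesic is minimizing forever). -/
noncomputable def cutTime {N : Type*} [MetricSpace N] (γ : ℝ → N) : ENNReal :=
  sSup (ENNReal.ofReal '' {t : ℝ | 0 < t ∧ dist (γ 0) (γ t) = t})

/-!
If no `ε` works, compactness of closed balls gives a point `z` with `d(γ s, z) ≤ r` and
`d(y, z) ≥ s + r`, and the triangle inequality forces both to be equalities. Following `γ` up
to `γ s` and then a minimizing segment from `γ s` to `z` is then a 1-Lipschitz curve whose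
endpoints are `s + r` apart, hence minimizing on `[0, s + r]`. Minimizing across the break
point, it is a geodesic; agreeing with `γ` on `[0, s]`, it is `γ` by rigidity. So `γ` is
minimizing up to time `s + r`, contradicting `τ < s + r`.
-/

open Set Filter Topology Metric

section

variable {N : Type*} [MetricSpace N]

lemma LipschitzWith.dist_le_sub {f : ℝ → N} (hf : LipschitzWith 1 f) {a b : ℝ} (hab : a ≤ b) :
    dist (f a) (f b) ≤ b - a := by
  simpa [Real.dist_eq, abs_sub_comm a b, abs_of_nonneg (sub_nonneg.2 hab)] using
    hf.dist_le_mul a b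

lemma LipschitzWith.of_dist_le_sub {f : ℝ → N}
    (h : ∀ a b, a ≤ b → dist (f a) (f b) ≤ b - a) : LipschitzWith 1 f := by
  refine LipschitzWith.mk_one fun a b => ?_
  rw [Real.dist_eq]
  rcases le_total a b with hab | hba
  · rw [abs_sub_comm, abs_of_nonneg (sub_nonneg.2 hab)]
    exact h a b hab
  · rw [dist_comm, abs_of_nonneg (sub_nonneg.2 hba)]
    exact h b a hba

namespace IsMinGeodOn

variable {γ : ℝ → N} {a b : ℝ}

lemma mono {a' b' : ℝ} (h : IsMinGeodOn γ a b) (ha : a ≤ a') (hb : b' ≤ b) :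
    IsMinGeodOn γ a' b' := fun u hu v hv =>
  h u (Icc_subset_Icc ha hb hu) v (Icc_subset_Icc ha hb hv)

lemma congr {σ : ℝ → N} (h : IsMinGeodOn γ a b) (hσ : EqOn σ γ (Icc a b)) :
    IsMinGeodOn σ a b := fun u hu v hv => by
  rw [hσ hu, hσ hv]
  exact h u hu v hv

lemma lipschitzOnWith (h : IsMinGeodOn γ a b) : LipschitzOnWith 1 γ (Icc a b) :=
  LipschitzOnWith.mk_one fun u hu v hv => ((h u hu v hv).trans (Real.dist_eq u v).symm).le

end IsMinGeodOn

lemma LipschitzWith.isMinGeodOn {σ : ℝ → N} (hσ : LipschitzWith 1 σ) {a b : ℝ}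
    (h : dist (σ a) (σ b) = b - a) : IsMinGeodOn σ a b := by
  have key : ∀ u ∈ Icc a b, ∀ v ∈ Icc a b, u ≤ v → dist (σ u) (σ v) = v - u := by
    rintro u ⟨hau, -⟩ v ⟨-, hvb⟩ huv
    refine le_antisymm (hσ.dist_le_sub huv) ?_
    linarith [dist_triangle4 (σ a) (σ u) (σ v) (σ b), hσ.dist_le_sub hau, hσ.dist_le_sub hvb]
  intro u hu v hv
  rcases le_total u v with huv | hvu
  · rw [key u hu v hv huv, abs_sub_comm, abs_of_nonneg (sub_nonneg.2 huv)]
  · rw [dist_comm, key v hv u hu hvu, abs_of_nonneg (sub_nonneg.2 hvu)]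

namespace IsGeodesic

variable {γ : ℝ → N}

lemma continuous (hγ : IsGeodesic γ) : Continuous γ :=
  LocallyLipschitz.continuous fun t =>
    let ⟨ε, hε, h⟩ := hγ t
    ⟨1, Icc (t - ε) (t + ε), Icc_mem_nhds (by linarith) (by linarith), h.lipschitzOnWith⟩

lemma lipschitzWith (hγ : IsGeodesic γ) : LipschitzWith 1 γ := by
  refine .of_dist_le_sub fun a b hab => ?_
  set S := {t | dist (γ a) (γ t) ≤ t - a}
  have hS : IsClosed S :=
    isClosed_le (continuous_const.dist hγ.continuous) (continuous_id.sub continuous_const)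
  refine (hS.inter isClosed_Icc).Icc_subset_of_forall_exists_gt (by simp [S]) ?_ ⟨hab, le_rfl⟩
  rintro t ⟨ht, -⟩ u htu
  obtain ⟨ε, hε, hmin⟩ := hγ t
  set δ := min ε (u - t)
  have hδ : 0 < δ := lt_min hε (sub_pos.2 htu)
  have hδε : δ ≤ ε := min_le_left _ _
  have hδu : δ ≤ u - t := min_le_right _ _
  have hstep : dist (γ t) (γ (t + δ)) = δ := by
    rw [hmin t ⟨by linarith, by linarith⟩ _ ⟨by linarith, by linarith⟩, sub_add_cancel_left,
      abs_neg, abs_of_pos hδ]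
  refine ⟨t + δ, ?_, by linarith, by linarith⟩
  show dist (γ a) (γ (t + δ)) ≤ t + δ - a
  linarith [dist_triangle (γ a) (γ t) (γ (t + δ)), show dist (γ a) (γ t) ≤ t - a from ht]

lemma comp_sub_const (hγ : IsGeodesic γ) (c : ℝ) : IsGeodesic fun t => γ (t - c) := by
  intro t
  obtain ⟨ε, hε, h⟩ := hγ (t - c)
  refine ⟨ε, hε, fun u hu v hv => ?_⟩
  rw [h (u - c) ⟨by linarith [hu.1], by linarith [hu.2]⟩ (v - c)
    ⟨by linarith [hv.1], by linarith [hv.2]⟩, sub_sub_sub_cancel_right]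

lemma exists_isMinGeodOn_of_eventuallyEq (hγ : IsGeodesic γ) {σ : ℝ → N} {t : ℝ}
    (h : σ =ᶠ[𝓝 t] γ) : ∃ ε > 0, IsMinGeodOn σ (t - ε) (t + ε) := by
  obtain ⟨δ, hδ, hσγ⟩ := nhds_basis_closedBall.eventually_iff.1 h
  obtain ⟨ε, hε, hmin⟩ := hγ t
  have hε' := min_le_left ε δ
  have hδ' := min_le_right ε δ
  refine ⟨min ε δ, lt_min hε hδ, (hmin.mono (by linarith) (by linarith)).congr fun u hu => ?_⟩
  apply hσγ
  rw [Real.closedBall_eq_Icc]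
  exact Icc_subset_Icc (by linarith) (by linarith) hu

end IsGeodesic

lemma ofReal_le_cutTime {γ : ℝ → N} {t : ℝ} (ht : 0 < t) (h : dist (γ 0) (γ t) = t) :
    ENNReal.ofReal t ≤ cutTime γ :=
  le_sSup ⟨t, ⟨ht, h⟩, rfl⟩

end

section

variable {N : Type*}

/-- The curve that follows `γ` up to time `s` and then `η`, restarted at time `s`. -/
noncomputable def concatAt (γ η : ℝ → N) (s t : ℝ) : N := if t ≤ s then γ t else η (t - s)

variable {γ η : ℝ → N} {s t : ℝ}

lemma concatAt_of_le (ht : t ≤ s) : concatAt γ η s t = γ t := if_pos ht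

lemma concatAt_of_ge (h0 : η 0 = γ s) (ht : s ≤ t) : concatAt γ η s t = η (t - s) := by
  rcases ht.eq_or_lt with rfl | hst
  · rw [concatAt_of_le le_rfl, sub_self, h0]
  · exact if_neg (not_le.2 hst)

lemma concatAt_eventuallyEq_of_lt (ht : t < s) : concatAt γ η s =ᶠ[𝓝 t] γ :=
  eventually_of_mem (Iio_mem_nhds ht) fun _ hu => concatAt_of_le (le_of_lt hu)

lemma concatAt_eventuallyEq_of_gt (h0 : η 0 = γ s) (ht : s < t) :
    concatAt γ η s =ᶠ[𝓝 t] fun u => η (u - s) :=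
  eventually_of_mem (Ioi_mem_nhds ht) fun _ hu => concatAt_of_ge h0 (le_of_lt hu)

variable [MetricSpace N]

lemma lipschitzWith_concatAt (hγ : LipschitzWith 1 γ) (hη : LipschitzWith 1 η)
    (h0 : η 0 = γ s) : LipschitzWith 1 (concatAt γ η s) := by
  have hle : ∀ u v, u ≤ v → v ≤ s → dist (concatAt γ η s u) (concatAt γ η s v) ≤ v - u :=
    fun u v huv hvs => by
      rw [concatAt_of_le (huv.trans hvs), concatAt_of_le hvs]
      exact hγ.dist_le_sub huv
  have hge : ∀ u v, s ≤ u → u ≤ v → dist (concatAt γ η s u) (concatAt γ η s v) ≤ v - u :=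
    fun u v hsu huv => by
      rw [concatAt_of_ge h0 hsu, concatAt_of_ge h0 (hsu.trans huv)]
      linarith [hη.dist_le_sub (sub_le_sub_right huv s)]
  refine .of_dist_le_sub fun u v huv => ?_
  rcases le_total v s with hvs | hsv
  · exact hle u v huv hvs
  rcases le_total s u with hsu | hus
  · exact hge u v hsu huv
  linarith [dist_triangle (concatAt γ η s u) (concatAt γ η s s) (concatAt γ η s v),
    hle u s hus le_rfl, hge s v le_rfl hsv]

lemma isGeodesic_concatAt (hγ : IsGeodesic γ) (hη : IsGeodesic η) (h0 : η 0 = γ s)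
    (hs : ∃ ε > 0, IsMinGeodOn (concatAt γ η s) (s - ε) (s + ε)) :
    IsGeodesic (concatAt γ η s) := by
  intro t
  rcases lt_trichotomy t s with hts | rfl | hst
  · exact hγ.exists_isMinGeodOn_of_eventuallyEq (concatAt_eventuallyEq_of_lt hts)
  · exact hs
  · exact (hη.comp_sub_const s).exists_isMinGeodOn_of_eventuallyEq
      (concatAt_eventuallyEq_of_gt h0 hst)

/-- Under geodesic rigidity, a minimizing broken geodesic is not broken. -/
theorem IsGeodesic.dist_add_eq_of_dist_eq
    (hrig : ∀ γ₁ γ₂ : ℝ → N, IsGeodesic γ₁ → IsGeodesic γ₂ →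
      ∀ a b : ℝ, a < b → (∀ t ∈ Set.Icc a b, γ₁ t = γ₂ t) → γ₁ = γ₂)
    (hγ : IsGeodesic γ) (hη : IsGeodesic η) {r : ℝ} (hs : 0 < s) (hr : 0 < r)
    (h0 : η 0 = γ s) (h : dist (γ 0) (η r) = s + r) : dist (γ 0) (γ (s + r)) = s + r := by
  have hσ0 : concatAt γ η s 0 = γ 0 := concatAt_of_le hs.le
  have hσr : concatAt γ η s (s + r) = η r := by
    rw [concatAt_of_ge h0 (by linarith), add_sub_cancel_left]
  have hmin : IsMinGeodOn (concatAt γ η s) 0 (s + r) :=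
    (lipschitzWith_concatAt hγ.lipschitzWith hη.lipschitzWith h0).isMinGeodOn
      (by rw [hσ0, hσr, h, sub_zero])
  have hσ : IsGeodesic (concatAt γ η s) := isGeodesic_concatAt hγ hη h0
    ⟨min s r, lt_min hs hr, hmin.mono (by linarith [min_le_left s r])
      (by linarith [min_le_right s r])⟩
  have hσγ : concatAt γ η s = γ := hrig _ γ hσ hγ 0 s hs fun t ht => concatAt_of_le ht.2
  calc dist (γ 0) (γ (s + r)) = dist (concatAt γ η s 0) (concatAt γ η s (s + r)) := by
        rw [hσγ]
    _ = s + r := by rw [hσ0, hσr, h]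

end

lemma exists_dist_le_and_le_dist_of_forall_ball_not_subset {α : Type*} [PseudoMetricSpace α]
    [ProperSpace α] {x y : α} {r R : ℝ} (h : ∀ ε > 0, ¬ ball x (r + ε) ⊆ ball y R) :
    ∃ z, dist x z ≤ r ∧ R ≤ dist y z := by
  set C := {z | R ≤ dist y z}
  have hC : IsClosed C := isClosed_le continuous_const (continuous_const.dist continuous_id)
  have hnear : ∀ ε > 0, ∃ z ∈ C, dist x z < r + ε := fun ε hε => by
    obtain ⟨z, hxz, hyz⟩ := not_subset.1 (h ε hε)
    rw [mem_ball, dist_comm] at hxz hyz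
    exact ⟨z, not_lt.1 hyz, hxz⟩
  obtain ⟨z, hz, hdist⟩ :=
    hC.exists_infDist_eq_dist (let ⟨z, hz, _⟩ := hnear 1 one_pos; ⟨z, hz⟩) x
  refine ⟨z, hdist ▸ le_of_forall_pos_lt_add fun ε hε => ?_, hz⟩
  obtain ⟨w, hw, hxw⟩ := hnear ε hε
  exact (infDist_le_dist_of_mem hw).trans_lt hxw

theorem ball_subset_closure_ball_of_cutTime_lt_general
    {N : Type*} [MetricSpace N] [ProperSpace N]
    (hconn : ∀ x y : N, ∃ γ : ℝ → N, IsGeodesic γ ∧ γ 0 = x ∧ γ (dist x y) = y ∧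
      IsMinGeodOn γ 0 (dist x y))
    (hrig : ∀ γ₁ γ₂ : ℝ → N, IsGeodesic γ₁ → IsGeodesic γ₂ →
      ∀ a b : ℝ, a < b → (∀ t ∈ Set.Icc a b, γ₁ t = γ₂ t) → γ₁ = γ₂)
    (γ : ℝ → N) (hγ : IsGeodesic γ) (y : N) (hy : γ 0 = y)
    (s r : ℝ) (hs : 0 < s) (hr : 0 < r)
    (hτ : cutTime γ < ENNReal.ofReal (s + r)) :
    ∃ ε > 0, Metric.ball (γ s) (r + ε) ⊆ closure (Metric.ball y (s + r)) := by
  by_contra hcon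
  obtain ⟨z, hxz, hyz⟩ := exists_dist_le_and_le_dist_of_forall_ball_not_subset
    fun ε hε hsub => hcon ⟨ε, hε, hsub.trans subset_closure⟩
  have hys : dist y (γ s) ≤ s := by simpa [hy] using hγ.lipschitzWith.dist_le_sub hs.le
  have htri := dist_triangle y (γ s) z
  obtain ⟨η, hη, hη0, hηz, -⟩ := hconn (γ s) z
  rw [le_antisymm hxz (by linarith)] at hηz
  have hmin := hγ.dist_add_eq_of_dist_eq hrig hη hs hr hη0
    (by rw [hy, hηz]; exact le_antisymm (by linarith) hyz)
  exact (ofReal_le_cutTime (by positivity) hmin).not_gt hτ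

/-- Let `(N,g)` be a complete Riemannian manifold (proper metric space
with minimizing geodesics joining any two points and geodesic rigidity), `γ` a unit-speed
geodesic with `γ 0 = y`, and `0 < s ≤ τ(y,ξ)`, `x = γ s`, `r > 0`.  If the cut time
satisfies `τ(y,ξ) < s + r`, then there is `ε > 0` with
`B(x, r+ε) ⊆ cl(B(y, s+r))`. -/
theorem ball_subset_closure_ball_of_cutTime_lt
    {N : Type*} [MetricSpace N] [ProperSpace N]
    (hconn : ∀ x y : N, ∃ γ : ℝ → N, IsGeodesic γ ∧ γ 0 = x ∧ γ (dist x y) = y ∧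
      IsMinGeodOn γ 0 (dist x y))
    (hrig : ∀ γ₁ γ₂ : ℝ → N, IsGeodesic γ₁ → IsGeodesic γ₂ →
      ∀ a b : ℝ, a < b → (∀ t ∈ Set.Icc a b, γ₁ t = γ₂ t) → γ₁ = γ₂)
    (γ : ℝ → N) (hγ : IsGeodesic γ) (y : N) (hy : γ 0 = y)
    (s r : ℝ) (hs : 0 < s) (hr : 0 < r)
    (hsτ : ENNReal.ofReal s ≤ cutTime γ)
    (hτ : cutTime γ < ENNReal.ofReal (s + r)) :
    ∃ ε > 0, Metric.ball (γ s) (r + ε) ⊆ closure (Metric.ball y (s + r)) :=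
  ball_subset_closure_ball_of_cutTime_lt_general hconn hrig γ hγ y hy s r hs hr hτ
end

section
/- Let (N,g) be a complete Riemannian manifold, y ∈ N, ξ a unit tangent vector at y, γ the geodesic with γ(0)=y, γ'(0)=ξ, s > 0 with x = γ(s) and d_g(x,y) = s. If for some r > 0 and ε > 0 we have B(x, r+ε) ⊂ cl(B(y, s+r)), then the cut time satisfies τ(y,ξ) ≤ s + r. -/
/-- A metric geodesic is 1-Lipschitz. -/
lemma IsGeodesic.dist_le {N : Type*} [MetricSpace N] {γ : ℝ → N} (hγ : IsGeodesic γ)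
    {a b : ℝ} (hab : a ≤ b) : dist (γ a) (γ b) ≤ b - a := by
  set S : Set ℝ := {c | c ∈ Set.Icc a b ∧ dist (γ a) (γ c) ≤ c - a} with hS
  have haS : a ∈ S := ⟨⟨le_refl a, hab⟩, by simp⟩
  have hbdd : BddAbove S := ⟨b, fun c hc => hc.1.2⟩
  set m := sSup S with hm
  have ham : a ≤ m := le_csSup hbdd haS
  have hmb : m ≤ b := csSup_le ⟨a, haS⟩ fun c hc => hc.1.2
  obtain ⟨δ, hδ, hloc⟩ := hγ m
  have hmS : m ∈ S := by
    obtain ⟨c, hcS, hc⟩ := exists_lt_of_lt_csSup ⟨a, haS⟩ (show m - δ < m by linarith)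
    have hcm : c ≤ m := le_csSup hbdd hcS
    have hdcm : dist (γ c) (γ m) = m - c := by
      have := hloc c ⟨hc.le, by linarith⟩ m ⟨by linarith, by linarith⟩
      rw [this, abs_sub_comm, abs_of_nonneg (by linarith)]
    refine ⟨⟨ham, hmb⟩, ?_⟩
    calc dist (γ a) (γ m) ≤ dist (γ a) (γ c) + dist (γ c) (γ m) := dist_triangle _ _ _
      _ ≤ (c - a) + (m - c) := add_le_add hcS.2 hdcm.le
      _ = m - a := by ring
  have hmeq : m = b := by
    by_contra hne
    have hmb' : m < b := lt_of_le_of_ne hmb hne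
    set c' := min b (m + δ) with hc'
    have hmc' : m < c' := lt_min hmb' (by linarith)
    have hc'b : c' ≤ b := min_le_left _ _
    have hdm : dist (γ m) (γ c') = c' - m := by
      have := hloc m ⟨by linarith, by linarith⟩ c'
        ⟨by linarith, min_le_right _ _⟩
      rw [this, abs_sub_comm, abs_of_nonneg (by linarith)]
    have hc'S : c' ∈ S := by
      refine ⟨⟨by linarith, hc'b⟩, ?_⟩
      calc dist (γ a) (γ c') ≤ dist (γ a) (γ m) + dist (γ m) (γ c') := dist_triangle _ _ _
        _ ≤ (m - a) + (c' - m) := add_le_add hmS.2 hdm.le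
        _ = c' - a := by ring
    exact absurd (le_csSup hbdd hc'S) (not_le.mpr hmc')
  have := hmS.2
  rwa [hmeq] at this

/-- Let `(N,g)` be a complete Riemannian manifold, `γ` the unit-speed
geodesic with `γ 0 = y`, `s > 0` with `x = γ s` and `dist x y = s`.  If for some `r > 0`
and `ε > 0` one has `B(x, r+ε) ⊆ cl(B(y, s+r))`, then the cut time satisfies
`τ(y,ξ) ≤ s + r`. -/
theorem cutTime_le_of_ball_subset
    {N : Type*} [MetricSpace N] [ProperSpace N]
    (γ : ℝ → N) (hγ : IsGeodesic γ) (y : N) (hy : γ 0 = y)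
    (s r ε : ℝ) (hs : 0 < s) (hr : 0 < r) (hε : 0 < ε)
    (hmin : dist (γ s) y = s)
    (hball : Metric.ball (γ s) (r + ε) ⊆ closure (Metric.ball y (s + r))) :
    cutTime γ ≤ ENNReal.ofReal (s + r) := by
  refine sSup_le ?_
  rintro x ⟨t, ⟨ht0, hdt⟩, rfl⟩
  refine ENNReal.ofReal_le_ofReal ?_
  by_contra hlt
  push_neg at hlt
  -- pick u strictly between s+r and min t (s+r+ε)
  set u := min t (s + r + ε / 2) with hu
  have hsru : s + r < u := lt_min hlt (by linarith)
  have hut : u ≤ t := min_le_left _ _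
  have husr : u ≤ s + r + ε / 2 := min_le_right _ _
  have hsu : s ≤ u := by linarith
  have h1 : dist (γ s) (γ u) ≤ u - s := hγ.dist_le hsu
  have hmem : γ u ∈ Metric.ball (γ s) (r + ε) := by
    rw [Metric.mem_ball, dist_comm]
    exact lt_of_le_of_lt h1 (by linarith)
  have h2 : dist (γ u) y ≤ s + r := by
    have := Metric.closure_ball_subset_closedBall (hball hmem)
    simpa [Metric.mem_closedBall] using this
  have h3 : dist (γ u) (γ t) ≤ t - u := hγ.dist_le hut
  have h4 : dist (γ 0) (γ u) ≤ s + r := by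
    rw [hy, dist_comm]; exact h2
  have : t ≤ (s + r) + (t - u) := by
    calc t = dist (γ 0) (γ t) := hdt.symm
      _ ≤ dist (γ 0) (γ u) + dist (γ u) (γ t) := dist_triangle _ _ _
      _ ≤ (s + r) + (t - u) := add_le_add h4 h3
  linarith
end

section
/- Let (N,g) be a complete Riemannian manifold, γ : [-ε, s+ε] → N a unit-speed minimizing geodesic with γ(0) = y. Then the intersection over δ ∈ (0, ε] of the closed balls cl(B(γ(-δ), s+2δ)) equals the closed ball cl(B(y, s)). -/
/-- Let `(N,g)` be a complete Riemannian manifold (proper metric space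
with minimizing geodesics joining any two points) and `γ : [-ε, s+ε] → N` a unit-speed
minimizing geodesic with `γ 0 = y`.  Then
`⋂_{δ ∈ (0,ε]} cl(B(γ(-δ), s+2δ)) = cl(B(y, s))`. -/
theorem iInter_closure_ball_eq
    {N : Type*} [MetricSpace N] [ProperSpace N]
    (hconn : ∀ x y : N, ∃ γ : ℝ → N, IsGeodesic γ ∧ γ 0 = x ∧ γ (dist x y) = y ∧
      IsMinGeodOn γ 0 (dist x y))
    (γ : ℝ → N) (y : N) (s ε : ℝ) (hs : 0 < s) (hε : 0 < ε)
    (hmin : IsMinGeodOn γ (-ε) (s + ε)) (hy : γ 0 = y) :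
    (⋂ δ ∈ Set.Ioc (0 : ℝ) ε, closure (Metric.ball (γ (-δ)) (s + 2 * δ))) =
      closure (Metric.ball y s) := by
  have hdist : ∀ δ : ℝ, 0 < δ → δ ≤ ε → dist (γ (-δ)) y = δ := by
    intro δ hδ hδε
    rw [← hy]
    rw [hmin (-δ) ⟨by linarith, by linarith⟩ 0 ⟨by linarith, by linarith⟩]
    rw [abs_of_nonpos (by linarith)]; ring
  ext x
  simp only [Set.mem_iInter, Set.mem_Ioc]
  constructor
  · intro h
    have hd3 : ∀ δ : ℝ, 0 < δ → δ ≤ ε → dist x y ≤ s + 3 * δ := by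
      intro δ hδ hδε
      have h1 : dist x (γ (-δ)) ≤ s + 2 * δ :=
        Metric.closure_ball_subset_closedBall (h δ ⟨hδ, hδε⟩)
      calc dist x y ≤ dist x (γ (-δ)) + dist (γ (-δ)) y := dist_triangle _ _ _
        _ ≤ s + 2 * δ + δ := by rw [hdist δ hδ hδε]; linarith
        _ = s + 3 * δ := by ring
    have hxy : dist x y ≤ s := by
      refine le_of_forall_pos_le_add ?_
      intro η hη
      have hδ : (0:ℝ) < min ε (η / 3) := lt_min hε (by linarith)
      have := hd3 (min ε (η / 3)) hδ (min_le_left _ _)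
      have h2 : min ε (η / 3) ≤ η / 3 := min_le_right _ _
      linarith
    -- now show x ∈ closure (ball y s)
    obtain ⟨γ', _, hγ0, hγd, hmin'⟩ := hconn y x
    set d := dist y x with hdd
    have hds : d ≤ s := by rwa [dist_comm] at hxy
    rcases eq_or_lt_of_le (dist_nonneg : (0:ℝ) ≤ dist y x) with hd0 | hd0
    · have hyx : y = x := dist_eq_zero.mp hd0.symm
      subst hyx
      exact subset_closure (Metric.mem_ball_self hs)
    · refine Metric.mem_closure_iff.2 fun r hr => ?_
      set m := min (r / 2) d with hm
      have hm0 : 0 < m := lt_min (by linarith) hd0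
      have hmd : m ≤ d := min_le_right _ _
      refine ⟨γ' (d - m), ?_, ?_⟩
      · have := hmin' 0 ⟨le_refl _, by linarith⟩ (d - m) ⟨by linarith, by linarith⟩
        rw [hγ0] at this
        rw [Metric.mem_ball, dist_comm, this, abs_of_nonpos (by linarith)]
        have : d - m < d := by linarith
        linarith
      · have := hmin' d ⟨hd0.le, le_refl _⟩ (d - m) ⟨by linarith, by linarith⟩
        rw [hγd] at this
        rw [dist_comm] at this
        rw [dist_comm, this, abs_of_nonneg (by linarith)]
        have : m ≤ r / 2 := min_le_left _ _
        linarith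
  · intro hx δ hδ
    have h1 : dist x y ≤ s := Metric.closure_ball_subset_closedBall hx
    refine subset_closure ?_
    rw [Metric.mem_ball]
    calc dist x (γ (-δ)) ≤ dist x y + dist y (γ (-δ)) := dist_triangle _ _ _
      _ = dist x y + δ := by rw [dist_comm y (γ (-δ)), hdist δ hδ.1 hδ.2]
      _ < s + 2 * δ := by linarith [hδ.1]
end

section
/- Let (N,g) be a complete Riemannian manifold and γ : [-ε, s+ε] → N a unit-speed minimizing geodesic with γ(0) = y, γ(s) = x₀. For δ ∈ (0, ε] define Z_δ = cl( cl(B(γ(-δ), s+2δ)) \ cl(B(γ(-ε), s+ε)) ). Then: (a) Z_δ ⊆ Z_{δ'} whenever 0 < δ ≤ δ' ≤ ε; (b) ⋂_{0<δ≤ε} Z_δ = {x₀}; (c) each Z_δ has nonempty interior and hence positive Riemannian measure. -/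
open MeasureTheory

/-- The set `Z_δ = cl( cl(B(γ(-δ), s+2δ)) \ cl(B(γ(-ε), s+ε)) )`. -/
def Zset {N : Type*} [MetricSpace N] (γ : ℝ → N) (s ε δ : ℝ) : Set N :=
  closure (closure (Metric.ball (γ (-δ)) (s + 2 * δ)) \
    closure (Metric.ball (γ (-ε)) (s + ε)))

/-- Gluing a minimizing geodesic `σ` on `[0,e]` with a minimizing geodesic `τ` on `[0,L]`
at the common point `σ e = τ 0`, under the assumption that the endpoints are at distance
exactly `e + L`, yields a global geodesic. -/
lemma glue_isGeodesic {N : Type*} [MetricSpace N] (σ τ : ℝ → N) (e L : ℝ)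
    (he : 0 < e) (hL : 0 < L) (hσg : IsGeodesic σ) (hτg : IsGeodesic τ)
    (hσ : IsMinGeodOn σ 0 e) (hτ : IsMinGeodOn τ 0 L)
    (hjoin : σ e = τ 0) (hdist : dist (σ 0) (τ L) = e + L) :
    IsGeodesic (fun t => if t ≤ 0 then σ (t + e) else τ t) := by
  have key : ∀ u v : ℝ, -e ≤ u → u ≤ 0 → 0 ≤ v → v ≤ L →
      dist (σ (u + e)) (τ v) = v - u := by
    intro u v h1 h2 h3 h4
    have hue : u + e ∈ Set.Icc (0:ℝ) e := ⟨by linarith, by linarith⟩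
    have hee : e ∈ Set.Icc (0:ℝ) e := ⟨le_of_lt he, le_refl _⟩
    have h0e : (0:ℝ) ∈ Set.Icc (0:ℝ) e := ⟨le_refl _, le_of_lt he⟩
    have h0L : (0:ℝ) ∈ Set.Icc (0:ℝ) L := ⟨le_refl _, le_of_lt hL⟩
    have hvL : v ∈ Set.Icc (0:ℝ) L := ⟨h3, h4⟩
    have hLL : L ∈ Set.Icc (0:ℝ) L := ⟨le_of_lt hL, le_refl _⟩
    have hub : dist (σ (u + e)) (τ v) ≤ v - u := by
      calc dist (σ (u + e)) (τ v) ≤ dist (σ (u + e)) (σ e) + dist (σ e) (τ v) :=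
            dist_triangle _ _ _
        _ = dist (σ (u + e)) (σ e) + dist (τ 0) (τ v) := by rw [hjoin]
        _ = |u + e - e| + |0 - v| := by rw [hσ _ hue _ hee, hτ _ h0L _ hvL]
        _ = v - u := by
            rw [show u + e - e = u by ring, show (0:ℝ) - v = -v by ring,
              abs_of_nonpos h2, abs_neg, abs_of_nonneg h3]; ring
    have t1 : dist (σ 0) (σ (u + e)) = u + e := by
      rw [hσ _ h0e _ hue, show (0:ℝ) - (u + e) = -(u + e) by ring, abs_neg,
        abs_of_nonneg (by linarith)]
    have t2 : dist (τ v) (τ L) = L - v := by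
      rw [hτ _ hvL _ hLL, abs_of_nonpos (by linarith)]; ring
    have htri := dist_triangle4 (σ 0) (σ (u + e)) (τ v) (τ L)
    rw [hdist, t1, t2] at htri
    have hlb : v - u ≤ dist (σ (u + e)) (τ v) := by linarith
    linarith
  intro t₀
  rcases lt_trichotomy t₀ 0 with ht | ht | ht
  · obtain ⟨a, ha, hmin'⟩ := hσg (t₀ + e)
    refine ⟨min a (-t₀ / 2), lt_min ha (by linarith), ?_⟩
    intro u hu v hv
    have hma : min a (-t₀ / 2) ≤ a := min_le_left _ _
    have hmt : min a (-t₀ / 2) ≤ -t₀ / 2 := min_le_right _ _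
    have hu0 : u ≤ 0 := by
      have := hu.2; linarith
    have hv0 : v ≤ 0 := by
      have := hv.2; linarith
    simp only [if_pos hu0, if_pos hv0]
    rw [hmin' (u + e) ⟨by have := hu.1; linarith, by have := hu.2; linarith⟩
        (v + e) ⟨by have := hv.1; linarith, by have := hv.2; linarith⟩,
      show u + e - (v + e) = u - v by ring]
  · subst ht
    refine ⟨min e L, lt_min he hL, ?_⟩
    intro u hu v hv
    have hmel : min e L ≤ e := min_le_left _ _
    have hmll : min e L ≤ L := min_le_right _ _
    have hu1 : -min e L ≤ u := by have := hu.1; linarith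
    have hu2 : u ≤ min e L := by have := hu.2; linarith
    have hv1 : -min e L ≤ v := by have := hv.1; linarith
    have hv2 : v ≤ min e L := by have := hv.2; linarith
    by_cases hu0 : u ≤ 0 <;> by_cases hv0 : v ≤ 0
    · simp only [if_pos hu0, if_pos hv0]
      rw [hσ (u + e) ⟨by linarith, by linarith⟩ (v + e) ⟨by linarith, by linarith⟩,
        show u + e - (v + e) = u - v by ring]
    · push_neg at hv0
      simp only [if_pos hu0, if_neg (not_le.mpr hv0)]
      rw [key u v (by linarith) hu0 (le_of_lt hv0) (by linarith),
        abs_of_nonpos (by linarith : u - v ≤ 0)]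
      ring
    · push_neg at hu0
      simp only [if_neg (not_le.mpr hu0), if_pos hv0]
      rw [dist_comm, key v u (by linarith) hv0 (le_of_lt hu0) (by linarith),
        abs_of_nonneg (by linarith : (0:ℝ) ≤ u - v)]
    · push_neg at hu0 hv0
      simp only [if_neg (not_le.mpr hu0), if_neg (not_le.mpr hv0)]
      exact hτ u ⟨le_of_lt hu0, by linarith⟩ v ⟨le_of_lt hv0, by linarith⟩
  · obtain ⟨a, ha, hmin'⟩ := hτg t₀
    refine ⟨min a (t₀ / 2), lt_min ha (by linarith), ?_⟩
    intro u hu v hv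
    have hma : min a (t₀ / 2) ≤ a := min_le_left _ _
    have hmt : min a (t₀ / 2) ≤ t₀ / 2 := min_le_right _ _
    have hu0 : ¬ u ≤ 0 := by
      have := hu.1; push_neg; linarith
    have hv0 : ¬ v ≤ 0 := by
      have := hv.1; push_neg; linarith
    simp only [if_neg hu0, if_neg hv0]
    exact hmin' u ⟨by have := hu.1; linarith, by have := hu.2; linarith⟩
      v ⟨by have := hv.1; linarith, by have := hv.2; linarith⟩

/-- Let `(N,g)` be a complete Riemannian manifold (proper metric space
with minimizing geodesics joining any two points and geodesic rigidity), equipped with its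
Riemannian volume measure `μ` (a measure positive on nonempty open sets), and
`γ : [-ε, s+ε] → N` a unit-speed minimizing geodesic with `γ 0 = y`, `γ s = x₀`.  Then:
(a) `Z_δ ⊆ Z_{δ'}` for `0 < δ ≤ δ' ≤ ε`;
(b) `⋂_{0<δ≤ε} Z_δ = {x₀}`;
(c) each `Z_δ` has nonempty interior, hence positive measure. -/
theorem Zset_properties
    {N : Type*} [MetricSpace N] [ProperSpace N]
    [MeasurableSpace N] (μ : Measure N) [μ.IsOpenPosMeasure]
    (hconn : ∀ x y : N, ∃ γ : ℝ → N, IsGeodesic γ ∧ γ 0 = x ∧ γ (dist x y) = y ∧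
      IsMinGeodOn γ 0 (dist x y))
    (hrig : ∀ γ₁ γ₂ : ℝ → N, IsGeodesic γ₁ → IsGeodesic γ₂ →
      ∀ a b : ℝ, a < b → (∀ t ∈ Set.Icc a b, γ₁ t = γ₂ t) → γ₁ = γ₂)
    (γ : ℝ → N) (y x₀ : N) (s ε : ℝ) (hs : 0 < s) (hε : 0 < ε)
    (hmin : IsMinGeodOn γ (-ε) (s + ε)) (hy : γ 0 = y) (hx₀ : γ s = x₀) :
    (∀ δ δ' : ℝ, 0 < δ → δ ≤ δ' → δ' ≤ ε → Zset γ s ε δ ⊆ Zset γ s ε δ') ∧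
    (⋂ δ ∈ Set.Ioc (0 : ℝ) ε, Zset γ s ε δ) = {x₀} ∧
    (∀ δ ∈ Set.Ioc (0 : ℝ) ε, (interior (Zset γ s ε δ)).Nonempty ∧
      0 < μ (Zset γ s ε δ)) := by
  -- Part (a)
  have parta : ∀ δ δ' : ℝ, 0 < δ → δ ≤ δ' → δ' ≤ ε → Zset γ s ε δ ⊆ Zset γ s ε δ' := by
    intro δ δ' h1 h2 h3
    apply closure_mono
    apply Set.diff_subset_diff_left
    apply closure_mono
    apply Metric.ball_subset_ball'
    have hd : dist (γ (-δ)) (γ (-δ')) = δ' - δ := by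
      rw [hmin (-δ) ⟨by linarith, by linarith⟩ (-δ') ⟨by linarith, by linarith⟩,
        show -δ - -δ' = δ' - δ by ring, abs_of_nonneg (by linarith)]
    rw [hd]; linarith
  -- the points γ(s+η) lie in the "annulus"
  have hmem : ∀ δ : ℝ, 0 < δ → δ ≤ ε → ∀ η : ℝ, 0 < η → η < δ → η ≤ ε →
      γ (s + η) ∈ closure (Metric.ball (γ (-δ)) (s + 2 * δ)) \
        closure (Metric.ball (γ (-ε)) (s + ε)) := by
    intro δ hδ hδε η hη hηδ hηε
    constructor
    · apply subset_closure
      rw [Metric.mem_ball, hmin (s + η) ⟨by linarith, by linarith⟩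
          (-δ) ⟨by linarith, by linarith⟩,
        show s + η - -δ = s + η + δ by ring, abs_of_nonneg (by linarith)]
      linarith
    · intro hcl
      have h := Metric.closure_ball_subset_closedBall hcl
      rw [Metric.mem_closedBall, hmin (s + η) ⟨by linarith, by linarith⟩
          (-ε) ⟨by linarith, by linarith⟩,
        show s + η - -ε = s + η + ε by ring, abs_of_nonneg (by linarith)] at h
      linarith
  -- Part (b)
  have partb : (⋂ δ ∈ Set.Ioc (0 : ℝ) ε, Zset γ s ε δ) = {x₀} := by
    apply Set.eq_singleton_iff_unique_mem.mpr
    constructor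
    · simp only [Set.mem_iInter]
      intro δ hδ
      show x₀ ∈ closure _
      rw [Metric.mem_closure_iff]
      intro r hr
      set η := min r (min δ ε) / 2 with hηdef
      have hη : 0 < η := by
        apply half_pos; exact lt_min hr (lt_min hδ.1 hε)
      have hηr : η < r := by
        have h1 : min r (min δ ε) ≤ r := min_le_left _ _
        rw [hηdef]; linarith
      have hηδ : η < δ := by
        have h1 : min r (min δ ε) ≤ δ := le_trans (min_le_right _ _) (min_le_left _ _)
        rw [hηdef]; linarith
      have hηε : η ≤ ε := by
        have h1 : min r (min δ ε) ≤ ε := le_trans (min_le_right _ _) (min_le_right _ _)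
        rw [hηdef]; linarith
      refine ⟨γ (s + η), hmem δ hδ.1 hδ.2 η hη hηδ hηε, ?_⟩
      rw [← hx₀, hmin s ⟨by linarith, by linarith⟩ (s + η) ⟨by linarith, by linarith⟩,
        show s - (s + η) = -η by ring, abs_neg, abs_of_nonneg (le_of_lt hη)]
      exact hηr
    · intro x hx
      simp only [Set.mem_iInter] at hx
      have fact1 : ∀ δ : ℝ, 0 < δ → δ ≤ ε → dist x (γ (-δ)) ≤ s + 2 * δ := by
        intro δ h1 h2
        have hxz := hx δ ⟨h1, h2⟩
        have h' : Zset γ s ε δ ⊆ closure (Metric.ball (γ (-δ)) (s + 2 * δ)) := by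
          unfold Zset
          calc closure (closure (Metric.ball (γ (-δ)) (s + 2 * δ)) \
                closure (Metric.ball (γ (-ε)) (s + ε)))
              ⊆ closure (closure (Metric.ball (γ (-δ)) (s + 2 * δ))) :=
                closure_mono Set.diff_subset
            _ = closure (Metric.ball (γ (-δ)) (s + 2 * δ)) := closure_closure
        exact Metric.mem_closedBall.mp (Metric.closure_ball_subset_closedBall (h' hxz))
      have fact2 : s + ε ≤ dist x (γ (-ε)) := by
        have hxz := hx ε ⟨hε, le_refl ε⟩
        have h' : Zset γ s ε ε ⊆ (Metric.ball (γ (-ε)) (s + ε))ᶜ := by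
          unfold Zset
          apply closure_minimal
          · intro z hz hball
            exact hz.2 (subset_closure hball)
          · exact Metric.isOpen_ball.isClosed_compl
        have h := h' hxz
        simp only [Set.mem_compl_iff, Metric.mem_ball, not_lt] at h
        exact h
      have hxy : dist x (γ 0) ≤ s := by
        by_contra hlt
        push_neg at hlt
        set δ := min ((dist x (γ 0) - s) / 4) ε with hδdef
        have hδpos : 0 < δ := lt_min (by linarith) hε
        have hδε : δ ≤ ε := min_le_right _ _
        have h1 := fact1 δ hδpos hδε
        have h2 : dist (γ (-δ)) (γ 0) = δ := by
          rw [hmin (-δ) ⟨by linarith, by linarith⟩ 0 ⟨by linarith, by linarith⟩,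
            show -δ - 0 = -δ by ring, abs_neg, abs_of_nonneg (le_of_lt hδpos)]
        have h3 : dist x (γ 0) ≤ s + 3 * δ := by
          have := dist_triangle x (γ (-δ)) (γ 0)
          rw [h2] at this; linarith
        have h4 : δ ≤ (dist x (γ 0) - s) / 4 := min_le_left _ _
        linarith
      have hyε : dist (γ 0) (γ (-ε)) = ε := by
        rw [hmin 0 ⟨by linarith, by linarith⟩ (-ε) ⟨by linarith, by linarith⟩,
          show (0:ℝ) - -ε = ε by ring, abs_of_nonneg (le_of_lt hε)]
      have hxε : dist x (γ (-ε)) = s + ε := by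
        have := dist_triangle x (γ 0) (γ (-ε))
        rw [hyε] at this
        linarith
      have hxy' : dist x (γ 0) = s := by
        have := dist_triangle x (γ 0) (γ (-ε))
        rw [hyε] at this
        linarith
      -- build geodesics and glue
      obtain ⟨σ, hσg, hσ0, hσe, hσmin⟩ := hconn (γ (-ε)) (γ 0)
      have hde : dist (γ (-ε)) (γ 0) = ε := by rw [dist_comm]; exact hyε
      rw [hde] at hσe hσmin
      obtain ⟨τ, hτg, hτ0, hτL, hτmin⟩ := hconn (γ 0) x
      have hdx : dist (γ 0) x = s := by rw [dist_comm]; exact hxy'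
      rw [hdx] at hτL hτmin
      obtain ⟨τ', hτ'g, hτ'0, hτ'L, hτ'min⟩ := hconn (γ 0) (γ s)
      have hdx0 : dist (γ 0) (γ s) = s := by
        rw [hmin 0 ⟨by linarith, by linarith⟩ s ⟨by linarith, by linarith⟩,
          show (0:ℝ) - s = -s by ring, abs_neg, abs_of_nonneg (le_of_lt hs)]
      rw [hdx0] at hτ'L hτ'min
      have hg1 := glue_isGeodesic σ τ ε s hε hs hσg hτg hσmin hτmin
        (by rw [hσe, hτ0]) (by rw [hσ0, hτL, dist_comm, hxε]; ring)
      have hdε0 : dist (γ (-ε)) (γ s) = ε + s := by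
        rw [hmin (-ε) ⟨by linarith, by linarith⟩ s ⟨by linarith, by linarith⟩,
          show -ε - s = -(ε + s) by ring, abs_neg, abs_of_nonneg (by linarith)]
      have hg0 := glue_isGeodesic σ τ' ε s hε hs hσg hτ'g hσmin hτ'min
        (by rw [hσe, hτ'0]) (by rw [hσ0, hτ'L]; exact hdε0)
      have heq := hrig _ _ hg1 hg0 (-2) (-1) (by norm_num) (by
        intro t ht
        have ht0 : t ≤ 0 := le_trans ht.2 (by norm_num)
        simp only [if_pos ht0])
      have hcs := congrFun heq s
      simp only [if_neg (not_le.mpr hs)] at hcs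
      rw [← hτL, hcs, hτ'L, hx₀]
  -- Part (c)
  have partc : ∀ δ ∈ Set.Ioc (0 : ℝ) ε, (interior (Zset γ s ε δ)).Nonempty ∧
      0 < μ (Zset γ s ε δ) := by
    intro δ hδ
    set U := Metric.ball (γ (-δ)) (s + 2 * δ) \ Metric.closedBall (γ (-ε)) (s + ε) with hU
    have hUopen : IsOpen U := Metric.isOpen_ball.sdiff Metric.isClosed_closedBall
    have hUsub : U ⊆ Zset γ s ε δ := by
      intro z hz
      apply subset_closure
      exact ⟨subset_closure hz.1, fun hc => hz.2 (Metric.closure_ball_subset_closedBall hc)⟩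
    set η := min δ ε / 2 with hηdef
    have hη : 0 < η := half_pos (lt_min hδ.1 hε)
    have hηδ : η < δ := by
      have := min_le_left δ ε; rw [hηdef]; linarith
    have hηε : η ≤ ε := by
      have := min_le_right δ ε; rw [hηdef]; linarith
    have hz : γ (s + η) ∈ U := by
      constructor
      · rw [Metric.mem_ball, hmin (s + η) ⟨by linarith, by linarith⟩
            (-δ) ⟨by linarith [hδ.2], by linarith [hδ.2]⟩,
          show s + η - -δ = s + η + δ by ring, abs_of_nonneg (by linarith [hδ.1])]
        linarith
      · intro h
        rw [Metric.mem_closedBall, hmin (s + η) ⟨by linarith, by linarith⟩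
            (-ε) ⟨by linarith, by linarith⟩,
          show s + η - -ε = s + η + ε by ring, abs_of_nonneg (by linarith)] at h
        linarith
    refine ⟨⟨_, interior_maximal hUsub hUopen hz⟩, ?_⟩
    have hpos : 0 < μ U := hUopen.measure_pos μ ⟨_, hz⟩
    exact lt_of_lt_of_le hpos (measure_mono hUsub)
  exact ⟨parta, partb, partc⟩
end
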